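/- arXiv:0902.4252 — 3 statements merged into one kernel-verified Lean document; each statement's English description precedes it below -/
import Mathlib

section
/- Let π be a group, k a field of characteristic zero, J the augmentation ideal of k[π]. If V and W are k[π]-modules such that J^{r+1} annihilates V and J^{s+1} annihilates W, then J^{r+s+1} annihilates V ⊗_k W with the diagonal π-action. -/
open scoped TensorProduct

/-- The augmentation ideal of the group algebra `k[π]`. -/
noncomputable def augIdeal (k : Type) [Field k] (π : Type) [Group π] :
    Submodule k (MonoidAlgebra k π) :=
  LinearMap.ker ((MonoidAlgebra.lift k k π 1).toLinearMap)

/-- "`J^n` annihilates the module": every product of `n` elements of the augmentation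
ideal acts as zero. -/
def AugPowAnnihilates (k : Type) [Field k] (π : Type) [Group π]
    (V : Type) [AddCommGroup V] [Module k V] (ρ : Representation k π V) (n : ℕ) : Prop :=
  ∀ a : Fin n → MonoidAlgebra k π, (∀ i, a i ∈ augIdeal k π) →
    (List.ofFn (fun i => ρ.asAlgebraHom (a i))).prod = 0

namespace Statement3Aux
open MonoidAlgebra Submodule

variable {k : Type} [Field k] {π : Type} [Group π]

noncomputable def eps : MonoidAlgebra k π →ₐ[k] k := MonoidAlgebra.lift k k π 1

lemma mem_augIdeal {x : MonoidAlgebra k π} :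
    x ∈ augIdeal k π ↔ eps x = 0 := Iff.rfl

lemma single_sub_one_mem (g : π) :
    (MonoidAlgebra.single g 1 : MonoidAlgebra k π) - 1 ∈ augIdeal k π := by
  rw [mem_augIdeal, map_sub, map_one, eps, MonoidAlgebra.lift_single]
  simp

lemma augIdeal_le_span :
    augIdeal k π ≤ Submodule.span k
      (Set.range fun g : π => (MonoidAlgebra.single g 1 : MonoidAlgebra k π) - 1) := by
  intro a ha
  have hgen : ∀ x : MonoidAlgebra k π, x - eps x • (1 : MonoidAlgebra k π) ∈ Submodule.span k
      (Set.range fun g : π => (MonoidAlgebra.single g 1 : MonoidAlgebra k π) - 1) := by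
    intro x
    induction x using MonoidAlgebra.induction_linear with
    | zero => simp
    | add x y hx hy =>
      rw [map_add, add_smul, add_sub_add_comm]
      exact Submodule.add_mem _ hx hy
    | single g r =>
      have h1 : MonoidAlgebra.single g r - eps (MonoidAlgebra.single g r) • (1 : MonoidAlgebra k π)
          = r • ((MonoidAlgebra.single g 1 : MonoidAlgebra k π) - 1) := by
        rw [eps, MonoidAlgebra.lift_single, smul_sub, MonoidAlgebra.smul_single', mul_one]
        simp
      rw [h1]
      exact Submodule.smul_mem _ _ (Submodule.subset_span ⟨g, rfl⟩)
  simpa [mem_augIdeal.mp ha] using hgen a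


/-- The comultiplication `g ↦ g ⊗ g` as a monoid hom into the tensor square. -/
noncomputable def deltaHom : π →* MonoidAlgebra k π ⊗[k] MonoidAlgebra k π where
  toFun g := MonoidAlgebra.single g 1 ⊗ₜ MonoidAlgebra.single g 1
  map_one' := by
    rw [Algebra.TensorProduct.one_def]
    rfl
  map_mul' g h := by
    rw [Algebra.TensorProduct.tmul_mul_tmul, MonoidAlgebra.single_mul_single, one_mul]

/-- The comultiplication on the group algebra. -/
noncomputable def delta : MonoidAlgebra k π →ₐ[k] MonoidAlgebra k π ⊗[k] MonoidAlgebra k π :=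
  MonoidAlgebra.lift k _ π deltaHom

lemma delta_single (g : π) :
    (delta (k := k) (π := π)) (MonoidAlgebra.single g 1 : MonoidAlgebra k π)
      = MonoidAlgebra.single g 1 ⊗ₜ MonoidAlgebra.single g 1 := by
  rw [delta, MonoidAlgebra.lift_single, one_smul]; rfl

/-- tensor product of two submodules of the group algebra, as a submodule of the
tensor square. -/
noncomputable def TP (p q : Submodule k (MonoidAlgebra k π)) :
    Submodule k (MonoidAlgebra k π ⊗[k] MonoidAlgebra k π) :=
  Submodule.map₂ (TensorProduct.mk k _ _) p q

lemma tmul_mem_TP {p q : Submodule k (MonoidAlgebra k π)} {x y : MonoidAlgebra k π}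
    (hx : x ∈ p) (hy : y ∈ q) : x ⊗ₜ y ∈ TP p q :=
  Submodule.apply_mem_map₂ _ hx hy

lemma TP_mono {p q p' q' : Submodule k (MonoidAlgebra k π)} (h1 : p ≤ p') (h2 : q ≤ q') :
    TP p q ≤ TP p' q' :=
  Submodule.map₂_le_map₂ h1 h2

lemma TP_mul_TP_le (p q p' q' : Submodule k (MonoidAlgebra k π)) :
    TP p q * TP p' q' ≤ TP (p * p') (q * q') := by
  rw [TP, TP, Submodule.map₂_eq_span_image2, Submodule.map₂_eq_span_image2,
    Submodule.span_mul_span]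
  rw [Submodule.span_le]
  rintro z hz
  rw [Set.mem_mul] at hz
  obtain ⟨u, hu, v, hv, rfl⟩ := hz
  obtain ⟨a, ha, b, hb, rfl⟩ := hu
  obtain ⟨c, hc, d, hd, rfl⟩ := hv
  show (a ⊗ₜ b) * (c ⊗ₜ d) ∈ TP (p * p') (q * q')
  rw [Algebra.TensorProduct.tmul_mul_tmul]
  exact tmul_mem_TP (Submodule.mul_mem_mul ha hc) (Submodule.mul_mem_mul hb hd)

/-- The "closure" `A·Jⁱ` of the `i`-th power of the augmentation ideal. -/
noncomputable def Jl (i : ℕ) : Submodule k (MonoidAlgebra k π) :=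
  ⊤ * (augIdeal k π) ^ i

lemma Jl_zero : (Jl 0 : Submodule k (MonoidAlgebra k π)) = ⊤ := by
  rw [Jl, pow_zero, mul_one]

lemma J_mul_top_le :
    (augIdeal k π) * ⊤ ≤ (⊤ : Submodule k (MonoidAlgebra k π)) * augIdeal k π := by
  rw [Submodule.mul_le]
  intro a ha b _
  have hab : a * b ∈ augIdeal k π := by
    rw [mem_augIdeal, map_mul, mem_augIdeal.mp ha, zero_mul]
  simpa using Submodule.mul_mem_mul (Submodule.mem_top (x := (1 : MonoidAlgebra k π))) hab

lemma J_mul_Jl_le (i : ℕ) : (augIdeal k π) * Jl i ≤ (Jl (i + 1) : Submodule k (MonoidAlgebra k π)) := by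
  rw [Jl, Jl, ← mul_assoc, pow_succ', ← mul_assoc]
  exact mul_le_mul' (J_mul_top_le) le_rfl

lemma top_mul_Jl_le (i : ℕ) : (⊤ : Submodule k (MonoidAlgebra k π)) * Jl i ≤ Jl i := by
  rw [Jl, ← mul_assoc]
  exact mul_le_mul' le_top le_rfl

/-- The target filtration submodule. -/
noncomputable def S (n : ℕ) : Submodule k (MonoidAlgebra k π ⊗[k] MonoidAlgebra k π) :=
  ⨆ i : Fin (n + 1), TP (Jl i.1) (Jl (n - i.1))

lemma delta_mem {a : MonoidAlgebra k π} (ha : a ∈ augIdeal k π) :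
    (delta (k := k) (π := π)) a ∈ TP (augIdeal k π) ⊤ + TP ⊤ (augIdeal k π) := by
  have h := augIdeal_le_span ha
  clear ha
  induction h using Submodule.span_induction with
  | mem x hx =>
    obtain ⟨g, rfl⟩ := hx
    have hkey : (delta (k := k) (π := π)) ((MonoidAlgebra.single g 1 : MonoidAlgebra k π) - 1)
        = ((MonoidAlgebra.single g 1 : MonoidAlgebra k π) - 1) ⊗ₜ MonoidAlgebra.single g 1
          + (1 : MonoidAlgebra k π) ⊗ₜ ((MonoidAlgebra.single g 1 : MonoidAlgebra k π) - 1) := by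
      rw [map_sub, map_one, delta_single, Algebra.TensorProduct.one_def,
        TensorProduct.sub_tmul, TensorProduct.tmul_sub]
      abel
    rw [hkey]
    exact Submodule.add_mem_sup (tmul_mem_TP (single_sub_one_mem g) Submodule.mem_top)
      (tmul_mem_TP Submodule.mem_top (single_sub_one_mem g))
  | zero => simpa using Submodule.zero_mem _
  | add x y hx hy ihx ihy => rw [map_add]; exact Submodule.add_mem _ ihx ihy
  | smul c x hx ihx => rw [map_smul]; exact Submodule.smul_mem _ _ ihx

lemma step_le (n : ℕ) :
    (TP (augIdeal k π) ⊤ + TP ⊤ (augIdeal k π)) * S n ≤ (S (n + 1) : Submodule k _) := by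
  rw [S, Submodule.mul_iSup]
  refine iSup_le fun i => ?_
  rw [Submodule.add_eq_sup, Submodule.sup_mul]
  have e1 : TP (augIdeal k π) ⊤ * TP (Jl i.1) (Jl (n - i.1))
      ≤ TP (Jl (i.1 + 1)) (Jl (n - i.1)) :=
    (TP_mul_TP_le _ _ _ _).trans (TP_mono (J_mul_Jl_le _) (top_mul_Jl_le _))
  have e2 : TP ⊤ (augIdeal k π) * TP (Jl i.1) (Jl (n - i.1))
      ≤ TP (Jl i.1) (Jl (n - i.1 + 1)) :=
    (TP_mul_TP_le _ _ _ _).trans (TP_mono (top_mul_Jl_le _) (J_mul_Jl_le _))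
  have hi : i.1 ≤ n := Nat.lt_succ_iff.mp i.2
  refine sup_le (e1.trans ?_) (e2.trans ?_)
  · refine le_iSup_of_le (⟨i.1 + 1, by omega⟩ : Fin (n + 2)) ?_
    simp only [Fin.val_mk]
    rw [show n + 1 - (i.1 + 1) = n - i.1 from by omega]
  · refine le_iSup_of_le (⟨i.1, by omega⟩ : Fin (n + 2)) ?_
    simp only [Fin.val_mk]
    rw [show n + 1 - i.1 = n - i.1 + 1 from by omega]

lemma delta_prod_mem : ∀ (n : ℕ) (a : Fin n → MonoidAlgebra k π),
    (∀ i, a i ∈ augIdeal k π) → (delta (k := k) (π := π)) ((List.ofFn a).prod) ∈ (S n : Submodule k _) := by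
  intro n
  induction n with
  | zero =>
    intro a _
    have : (List.ofFn a).prod = 1 := by simp
    rw [this, map_one]
    refine le_iSup (fun i : Fin 1 => TP (Jl i.1) (Jl (0 - i.1))) 0 ?_
    rw [Algebra.TensorProduct.one_def]
    exact tmul_mem_TP (by rw [show ((0 : Fin 1) : ℕ) = 0 from rfl, Jl_zero]; trivial)
      (by rw [show (0 : ℕ) - ((0 : Fin 1) : ℕ) = 0 from rfl, Jl_zero]; trivial)
  | succ n ih =>
    intro a ha
    rw [List.ofFn_succ, List.prod_cons, map_mul]
    exact step_le n (Submodule.mul_mem_mul (delta_mem (ha 0)) (ih _ fun i => ha i.succ))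

lemma pow_le_span_prods (n : ℕ) :
    (augIdeal k π) ^ n ≤ Submodule.span k
      {x : MonoidAlgebra k π | ∃ a : Fin n → MonoidAlgebra k π,
        (∀ i, a i ∈ augIdeal k π) ∧ (List.ofFn a).prod = x} := by
  induction n with
  | zero =>
    rw [pow_zero, Submodule.one_eq_span]
    refine Submodule.span_le.mpr (Set.singleton_subset_iff.mpr (Submodule.subset_span ?_))
    exact ⟨fun i => i.elim0, fun i => i.elim0, by simp⟩
  | succ n ih =>
    rw [pow_succ, Submodule.mul_le]
    intro x hx y hy
    have hx' := ih hx
    clear hx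
    induction hx' using Submodule.span_induction with
    | mem m hm =>
      obtain ⟨a, haJ, rfl⟩ := hm
      refine Submodule.subset_span ⟨Fin.snoc a y, ?_, ?_⟩
      · intro i
        refine Fin.lastCases ?_ ?_ i
        · rw [Fin.snoc_last]; exact hy
        · intro j; rw [Fin.snoc_castSucc]; exact haJ j
      · rw [List.ofFn_succ', List.concat_eq_append, List.prod_append, List.prod_cons,
          List.prod_nil, Fin.snoc_last, mul_one]
        simp only [Fin.snoc_castSucc]
    | zero => rw [zero_mul]; exact Submodule.zero_mem _
    | add u v hu hv ihu ihv => rw [add_mul]; exact Submodule.add_mem _ ihu ihv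
    | smul c u hu ihu => rw [smul_mul_assoc]; exact Submodule.smul_mem _ _ ihu

lemma annih_of_mem {V : Type} [AddCommGroup V] [Module k V] {ρ : Representation k π V}
    {r : ℕ} (hV : AugPowAnnihilates k π V ρ (r + 1)) {i : ℕ} (hi : r + 1 ≤ i)
    {x : MonoidAlgebra k π} (hx : x ∈ (Jl i : Submodule k (MonoidAlgebra k π))) :
    ρ.asAlgebraHom x = 0 := by
  have hker : ∀ y ∈ (augIdeal k π) ^ (r + 1), ρ.asAlgebraHom y = 0 := by
    intro y hy
    have hy' := pow_le_span_prods (r + 1) hy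
    clear hy
    induction hy' using Submodule.span_induction with
    | mem m hm =>
      obtain ⟨a, haJ, rfl⟩ := hm
      rw [map_list_prod, List.map_ofFn]
      exact hV a haJ
    | zero => rw [map_zero]
    | add u v hu hv ihu ihv => rw [map_add, ihu, ihv, add_zero]
    | smul c u hu ihu => rw [map_smul, ihu, smul_zero]
  have hpow : ∀ y ∈ (augIdeal k π) ^ i, ρ.asAlgebraHom y = 0 := by
    obtain ⟨m, rfl⟩ := Nat.exists_eq_add_of_le hi
    intro y hy
    rw [pow_add] at hy
    have hle : (augIdeal k π) ^ (r + 1) * (augIdeal k π) ^ m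
        ≤ LinearMap.ker (ρ.asAlgebraHom.toLinearMap) := by
      rw [Submodule.mul_le]
      intro u hu v _
      rw [LinearMap.mem_ker, AlgHom.toLinearMap_apply, map_mul, hker u hu, zero_mul]
    simpa using hle hy
  have hle : (Jl i : Submodule k (MonoidAlgebra k π))
      ≤ LinearMap.ker (ρ.asAlgebraHom.toLinearMap) := by
    rw [Jl, Submodule.mul_le]
    intro u _ v hv
    rw [LinearMap.mem_ker, AlgHom.toLinearMap_apply, map_mul, hpow v hv, mul_zero]
  simpa using hle hx

variable {V W : Type} [AddCommGroup V] [Module k V] [AddCommGroup W] [Module k W]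

/-- The map `A ⊗ A → End (V ⊗ W)` induced by two representations. -/
noncomputable def Phi (ρ : Representation k π V) (τ : Representation k π W) :
    MonoidAlgebra k π ⊗[k] MonoidAlgebra k π →ₗ[k] Module.End k (V ⊗[k] W) :=
  (TensorProduct.homTensorHomMap (RingHom.id k) V W V W) ∘ₗ
    (TensorProduct.map ρ.asAlgebraHom.toLinearMap τ.asAlgebraHom.toLinearMap)

lemma Phi_tmul (ρ : Representation k π V) (τ : Representation k π W)
    (x y : MonoidAlgebra k π) :
    Phi ρ τ (x ⊗ₜ y) = TensorProduct.map (ρ.asAlgebraHom x) (τ.asAlgebraHom y) := by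
  rw [Phi, LinearMap.comp_apply, TensorProduct.map_tmul, TensorProduct.homTensorHomMap_apply,
    AlgHom.toLinearMap_apply, AlgHom.toLinearMap_apply]

lemma tprod_asAlgebraHom (ρ : Representation k π V) (τ : Representation k π W)
    (x : MonoidAlgebra k π) :
    (ρ.tprod τ).asAlgebraHom x = Phi ρ τ ((delta (k := k) (π := π)) x) := by
  have h : ((ρ.tprod τ).asAlgebraHom.toLinearMap)
      = (Phi ρ τ) ∘ₗ ((delta (k := k) (π := π)).toLinearMap) := by
    refine MonoidAlgebra.lhom_ext' fun g => LinearMap.ext fun b => ?_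
    show (ρ.tprod τ).asAlgebraHom (MonoidAlgebra.single g b)
      = Phi ρ τ ((delta (k := k) (π := π)) (MonoidAlgebra.single g b))
    have h1 : (MonoidAlgebra.single g b : MonoidAlgebra k π)
        = b • MonoidAlgebra.single g 1 := by
      rw [MonoidAlgebra.smul_single', mul_one]
    rw [h1, map_smul, map_smul, map_smul, delta_single, Phi_tmul,
      Representation.asAlgebraHom_single_one, Representation.asAlgebraHom_single_one,
      Representation.asAlgebraHom_single_one, Representation.tprod_apply]
  exact DFunLike.congr_fun h x

end Statement3Aux

/-- if `J^(r+1)` annihilates `V` and `J^(s+1)` annihilates `W`, then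
`J^(r+s+1)` annihilates `V ⊗_k W` with the diagonal `π`-action `g·(v⊗w) = gv ⊗ gw`. -/
theorem statement3 (k : Type) [Field k] [CharZero k] (π : Type) [Group π]
    (V W : Type) [AddCommGroup V] [Module k V] [AddCommGroup W] [Module k W]
    (ρ : Representation k π V) (τ : Representation k π W) (r s : ℕ)
    (hV : AugPowAnnihilates k π V ρ (r + 1))
    (hW : AugPowAnnihilates k π W τ (s + 1)) :
    AugPowAnnihilates k π (V ⊗[k] W) (ρ.tprod τ) (r + s + 1) := by
  intro a ha
  have hmem := Statement3Aux.delta_prod_mem (r + s + 1) a ha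
  have hS : (Statement3Aux.S (r + s + 1) : Submodule k _)
      ≤ LinearMap.ker (Statement3Aux.Phi ρ τ) := by
    rw [Statement3Aux.S]
    refine iSup_le fun i => Submodule.map₂_le.2 fun x hx y hy => ?_
    have hi : i.1 ≤ r + s + 1 := Nat.lt_succ_iff.mp i.2
    rw [LinearMap.mem_ker]
    show Statement3Aux.Phi ρ τ (x ⊗ₜ y) = 0
    rw [Statement3Aux.Phi_tmul]
    rcases le_or_gt (r + 1) i.1 with h | h
    · rw [Statement3Aux.annih_of_mem hV h hx]
      ext v w
      simp
    · have hj : s + 1 ≤ r + s + 1 - i.1 := by omega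
      rw [Statement3Aux.annih_of_mem hW hj hy]
      ext v w
      simp
  have hzero : (ρ.tprod τ).asAlgebraHom ((List.ofFn a).prod) = 0 := by
    rw [Statement3Aux.tprod_asAlgebraHom]
    exact LinearMap.mem_ker.mp (hS hmem)
  have hmap : (List.ofFn fun i => (ρ.tprod τ).asAlgebraHom (a i))
      = (List.ofFn a).map (ρ.tprod τ).asAlgebraHom := by
    rw [List.map_ofFn]
    rfl
  rw [hmap, ← map_list_prod, hzero]
end

section
/- Let A be a commutative Hopf algebra over ℚ equipped with an exhaustive increasing filtration W• by subspaces, compatible with multiplication (W_i · W_j ⊆ W_{i+j}), such that the comultiplication μ* : A → A ⊗ A is strictly compatible with W (i.e., μ*(W_i A) = μ*(A) ∩ W_i(A ⊗ A), where W_n(A⊗A) = Σ_{i+j=n} W_i A ⊗ W_j A) and μ* is injective. If W_{−1} A = 0, then μ*(W_i A) ⊆ A ⊗ W_i A and μ*(W_i A) ⊆ W_i A ⊗ A for all i. -/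
open scoped TensorProduct

/-- The tensor product filtration `W_n(A ⊗ A) = Σ_{i+j=n} W_i A ⊗ W_j A`. -/
noncomputable def tensorFiltration (A : Type) [CommRing A] [Algebra ℚ A]
    (W : ℤ → Submodule ℚ A) (n : ℤ) : Submodule ℚ (A ⊗[ℚ] A) :=
  ⨆ i : ℤ, LinearMap.range (TensorProduct.map (W i).subtype (W (n - i)).subtype)

/-- Let `A` be a commutative Hopf algebra over `ℚ` with an exhaustive
increasing filtration `W•` compatible with multiplication, whose comultiplication `μ*`
is injective and strictly compatible with `W`.  If `W_{-1} A = 0`, then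
`μ*(W_i A) ⊆ A ⊗ W_i A` and `μ*(W_i A) ⊆ W_i A ⊗ A` for all `i`. -/
theorem statement7 (A : Type) [CommRing A] [Algebra ℚ A]
    (μ : A →ₐ[ℚ] A ⊗[ℚ] A) (hμinj : Function.Injective μ)
    (W : ℤ → Submodule ℚ A)
    (hmono : Monotone W)
    (hexh : (⨆ i : ℤ, W i) = ⊤)
    (hmul : ∀ i j : ℤ, ∀ a ∈ W i, ∀ b ∈ W j, a * b ∈ W (i + j))
    (hstrict : ∀ n : ℤ, Submodule.map μ.toLinearMap (W n) =
      LinearMap.range μ.toLinearMap ⊓ tensorFiltration A W n)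
    (hW : W (-1) = ⊥) :
    ∀ i : ℤ,
      Submodule.map μ.toLinearMap (W i) ≤
        LinearMap.range (TensorProduct.map (LinearMap.id : A →ₗ[ℚ] A) (W i).subtype) ∧
      Submodule.map μ.toLinearMap (W i) ≤
        LinearMap.range (TensorProduct.map (W i).subtype (LinearMap.id : A →ₗ[ℚ] A)) := by
  intro i
  have hbot : ∀ j : ℤ, j < 0 → W j = ⊥ := fun j hj =>
    le_bot_iff.mp (hW ▸ hmono (by omega : j ≤ -1))
  have hsub : ∀ j : ℤ, j < 0 → (W j).subtype = 0 := by
    intro j hj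
    ext ⟨x, hx⟩
    rw [hbot j hj] at hx
    simpa using hx
  have hT1 : tensorFiltration A W i ≤
      LinearMap.range (TensorProduct.map (LinearMap.id : A →ₗ[ℚ] A) (W i).subtype) := by
    apply iSup_le
    intro j
    by_cases hj : 0 ≤ j
    · have hle : W (i - j) ≤ W i := hmono (by omega)
      have hfac : TensorProduct.map (W j).subtype (W (i - j)).subtype =
          (TensorProduct.map (LinearMap.id : A →ₗ[ℚ] A) (W i).subtype).comp
            (TensorProduct.map (W j).subtype (Submodule.inclusion hle)) := by
        rw [← TensorProduct.map_comp]
        congr 1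
      rw [hfac]
      exact LinearMap.range_comp_le_range _ _
    · rw [hsub j (by omega)]
      simp
  have hT2 : tensorFiltration A W i ≤
      LinearMap.range (TensorProduct.map (W i).subtype (LinearMap.id : A →ₗ[ℚ] A)) := by
    apply iSup_le
    intro j
    by_cases hj : j ≤ i
    · have hle : W j ≤ W i := hmono hj
      have hfac : TensorProduct.map (W j).subtype (W (i - j)).subtype =
          (TensorProduct.map (W i).subtype (LinearMap.id : A →ₗ[ℚ] A)).comp
            (TensorProduct.map (Submodule.inclusion hle) (W (i - j)).subtype) := by
        rw [← TensorProduct.map_comp]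
        congr 1
      rw [hfac]
      exact LinearMap.range_comp_le_range _ _
    · rw [hsub (i - j) (by omega)]
      simp
  rw [hstrict i]
  exact ⟨le_trans inf_le_right hT1, le_trans inf_le_right hT2⟩
end

section
/- Let (H^i) and (K^i) be cohomological δ-functors from an abelian category C closed under filtered colimits to vector spaces, commuting with filtered colimits, and let φ^i : H^i → K^i be a morphism of δ-functors with φ^0 an isomorphism. Fix n ≥ 0. The following are equivalent: (1) φ^i is an isomorphism for i ≤ n and injective for i = n+1 on all objects; (2) φ^i is surjective for all i ≤ n on all objects; (3) for every object V, every 1 ≤ i ≤ n, and every α ∈ K^i(V), there is a monomorphism V ↪ V' in C such that α maps to 0 in K^i(V'). -/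
open CategoryTheory

universe v

/-- A cohomological δ-functor from an abelian category `C` to vector spaces over `k`:
a sequence of additive functors `F n : C ⥤ ModuleCat k` together with connecting maps
`δ : F n (X₃) ⟶ F (n+1) (X₁)` for every short exact sequence `0 → X₁ → X₂ → X₃ → 0`,
fitting into a long exact sequence. -/
structure DeltaFunctor (C : Type) [Category C] [Abelian C] (k : Type) [Field k] where
  F : ℕ → C ⥤ ModuleCat.{v} k
  δ : ∀ (S : ShortComplex C), S.ShortExact → ∀ n : ℕ, (F n).obj S.X₃ ⟶ (F (n + 1)).obj S.X₁
  ex₁ : ∀ (S : ShortComplex C) (hS : S.ShortExact) (n : ℕ),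
    Function.Exact ((F n).map S.f) ((F n).map S.g)
  ex₂ : ∀ (S : ShortComplex C) (hS : S.ShortExact) (n : ℕ),
    Function.Exact ((F n).map S.g) (δ S hS n)
  ex₃ : ∀ (S : ShortComplex C) (hS : S.ShortExact) (n : ℕ),
    Function.Exact (δ S hS n) ((F (n + 1)).map S.f)

/-- A morphism of δ-functors: a sequence of natural transformations commuting with the
connecting maps. -/
structure DeltaHom {C : Type} [Category C] [Abelian C] {k : Type} [Field k]
    (H K : DeltaFunctor C k) where
  hom : ∀ n : ℕ, H.F n ⟶ K.F n
  comm : ∀ (S : ShortComplex C) (hS : S.ShortExact) (n : ℕ),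
    H.δ S hS n ≫ (hom (n + 1)).app S.X₁ = (hom n).app S.X₃ ≫ K.δ S hS n

/-- A δ-functor is universal if every natural transformation out of its degree-zero part
extends uniquely to a morphism of δ-functors. -/
def DeltaFunctor.IsUniversal {C : Type} [Category C] [Abelian C] {k : Type} [Field k]
    (H : DeltaFunctor C k) : Prop :=
  ∀ (K : DeltaFunctor C k) (t : H.F 0 ⟶ K.F 0), ∃! h : DeltaHom H K, h.hom 0 = t



open CategoryTheory.Limits in
/-- The short exact sequence `0 → X → Y → coker f → 0` associated to a mono `f`. -/
noncomputable def monoSES {C : Type} [Category C] [Abelian C] {X Y : C} (f : X ⟶ Y) [Mono f] :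
    ShortComplex C :=
  ShortComplex.mk f (cokernel.π f) (cokernel.condition f)

open CategoryTheory.Limits in
lemma monoSES_shortExact {C : Type} [Category C] [Abelian C] {X Y : C} (f : X ⟶ Y) [Mono f] :
    (monoSES f).ShortExact := by
  refine { exact := ?_, mono_f := ?_, epi_g := ?_ }
  · exact ShortComplex.exact_of_g_is_cokernel _ (cokernelIsCokernel f)
  · exact ‹Mono f›
  · exact coequalizer.π_epi

lemma nat_apply {C : Type} [Category C] [Abelian C] {k : Type} [Field k]
    {H K : DeltaFunctor C k} (φ : DeltaHom H K) (i : ℕ) {X Y : C} (f : X ⟶ Y)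
    (x : (H.F i).obj X) :
    (φ.hom i).app Y ((H.F i).map f x) = (K.F i).map f ((φ.hom i).app X x) := by
  have h := (φ.hom i).naturality f
  have h2 := congrArg (fun (m : (H.F i).obj X ⟶ (K.F i).obj Y) => m x) h
  simp only [CategoryTheory.comp_apply] at h2
  exact h2

lemma delta_apply {C : Type} [Category C] [Abelian C] {k : Type} [Field k]
    {H K : DeltaFunctor C k} (φ : DeltaHom H K) (S : ShortComplex C) (hS : S.ShortExact)
    (i : ℕ) (x : (H.F i).obj S.X₃) :
    (φ.hom (i + 1)).app S.X₁ (H.δ S hS i x) = K.δ S hS i ((φ.hom i).app S.X₃ x) := by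
  have h := φ.comm S hS i
  have h2 := congrArg (fun (m : (H.F i).obj S.X₃ ⟶ (K.F (i + 1)).obj S.X₁) => m x) h
  simp only [CategoryTheory.comp_apply] at h2
  exact h2

/-- Dimension shift: injectivity one degree up, from bijectivity. -/
lemma inj_step {C : Type} [Category C] [Abelian C] [EnoughInjectives C] {k : Type} [Field k]
    {H K : DeltaFunctor C k}
    (hHinj : ∀ (I : C), Injective I → ∀ i : ℕ, Subsingleton ((H.F (i + 1)).obj I))
    (φ : DeltaHom H K) (i : ℕ)
    (hbij : ∀ X : C, Function.Bijective ((φ.hom i).app X)) :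
    ∀ X : C, Function.Injective ((φ.hom (i + 1)).app X) := by
  intro X
  rw [injective_iff_map_eq_zero]
  intro β hβ
  haveI : Mono (Injective.ι X) := inferInstance
  set S := monoSES (Injective.ι X) with hSdef
  have hS := monoSES_shortExact (Injective.ι X)
  haveI hI : Subsingleton ((H.F (i + 1)).obj (Injective.under X)) :=
    hHinj _ (Injective.injective_under X) i
  have h1 : (H.F (i + 1)).map S.f β = 0 := @Subsingleton.elim _ hI _ _
  obtain ⟨γ, hγ⟩ := (H.ex₃ S hS i β).mp h1
  have h2 : K.δ S hS i ((φ.hom i).app S.X₃ γ) = 0 := by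
    rw [← delta_apply, hγ]; exact hβ
  obtain ⟨ε, hε⟩ := (K.ex₂ S hS i _).mp h2
  obtain ⟨ε', hε'⟩ := (hbij S.X₂).2 ε
  have h3 : (φ.hom i).app S.X₃ ((H.F i).map S.g ε') = (φ.hom i).app S.X₃ γ := by
    rw [nat_apply, hε', hε]
  have h4 : (H.F i).map S.g ε' = γ := (hbij S.X₃).1 h3
  have h5 : H.δ S hS i γ = 0 := by
    rw [← h4]
    exact (H.ex₂ S hS i).apply_apply_eq_zero ε'
  have h6 : (0 : (H.F (i + 1)).obj S.X₁) = β := by rw [← hγ, h5]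
  exact h6.symm

/-- Dimension shift: surjectivity one degree up, from surjectivity and condition (3). -/
lemma surj_step {C : Type} [Category C] [Abelian C] {k : Type} [Field k]
    {H K : DeltaFunctor C k} (φ : DeltaHom H K) (i : ℕ)
    (hsurj : ∀ X : C, Function.Surjective ((φ.hom i).app X))
    (h3 : ∀ X : C, ∀ α : (K.F (i + 1)).obj X,
      ∃ (X' : C) (f : X ⟶ X'), Mono f ∧ (K.F (i + 1)).map f α = 0) :
    ∀ X : C, Function.Surjective ((φ.hom (i + 1)).app X) := by
  intro X α
  obtain ⟨X', f, hf, hα⟩ := h3 X α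
  haveI := hf
  set S := monoSES f with hSdef
  have hS := monoSES_shortExact f
  obtain ⟨γ, hγ⟩ := (K.ex₃ S hS i α).mp hα
  obtain ⟨γ', hγ'⟩ := hsurj S.X₃ γ
  refine ⟨H.δ S hS i γ', ?_⟩
  show (φ.hom (i + 1)).app S.X₁ (H.δ S hS i γ') = α
  rw [delta_apply, hγ', hγ]

open CategoryTheory.Limits in
/-- Let `(H^i)` and `(K^i)` be cohomological δ-functors, commuting with
filtered colimits, from an abelian category `C` with enough injectives and filtered
colimits to vector spaces, with `H^i` vanishing on injectives in positive degrees, and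
let `φ : (H^i) → (K^i)` be a morphism of δ-functors with `φ^0` an isomorphism.  Fix
`n ≥ 0`.  The following are equivalent:
(1) `φ^i` is an isomorphism for `i ≤ n` and injective for `i = n + 1` on all objects;
(2) `φ^i` is surjective for all `i ≤ n` on all objects;
(3) for every object `V`, every `1 ≤ i ≤ n`, and every `α ∈ K^i(V)`, there is a
monomorphism `V ↪ V'` in `C` such that `α` maps to `0` in `K^i(V')`. -/
theorem statement17 (C : Type) [Category C] [Abelian C] [EnoughInjectives C]
    [HasFilteredColimits C]
    (k : Type) [Field k]
    (H K : DeltaFunctor C k)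
    (hHfilt : ∀ i : ℕ, Nonempty (PreservesFilteredColimits (H.F i)))
    (hKfilt : ∀ i : ℕ, Nonempty (PreservesFilteredColimits (K.F i)))
    (hHinj : ∀ (I : C), Injective I → ∀ i : ℕ, Subsingleton ((H.F (i + 1)).obj I))
    (φ : DeltaHom H K)
    (hφ0 : ∀ X : C, Function.Bijective ((φ.hom 0).app X))
    (n : ℕ) :
    (((∀ i : ℕ, i ≤ n → ∀ X : C, Function.Bijective ((φ.hom i).app X)) ∧
        (∀ X : C, Function.Injective ((φ.hom (n + 1)).app X))) ↔
      (∀ i : ℕ, i ≤ n → ∀ X : C, Function.Surjective ((φ.hom i).app X))) ∧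
    ((∀ i : ℕ, i ≤ n → ∀ X : C, Function.Surjective ((φ.hom i).app X)) ↔
      (∀ (X : C) (i : ℕ), 1 ≤ i → i ≤ n → ∀ α : (K.F i).obj X,
        ∃ (X' : C) (f : X ⟶ X'), Mono f ∧ (K.F i).map f α = 0)) := by
  -- (2) implies (3)
  have h23 : (∀ i : ℕ, i ≤ n → ∀ X : C, Function.Surjective ((φ.hom i).app X)) →
      (∀ (X : C) (i : ℕ), 1 ≤ i → i ≤ n → ∀ α : (K.F i).obj X,
        ∃ (X' : C) (f : X ⟶ X'), Mono f ∧ (K.F i).map f α = 0) := by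
    intro h2 X i hi1 hin α
    obtain ⟨β, hβ⟩ := h2 i hin X α
    cases i with
    | zero => omega
    | succ j =>
      haveI := hHinj (Injective.under X) (Injective.injective_under X) j
      refine ⟨Injective.under X, Injective.ι X, inferInstance, ?_⟩
      have h0 : (H.F (j + 1)).map (Injective.ι X) β = 0 := Subsingleton.elim _ _
      rw [← hβ, ← nat_apply, h0, map_zero]
  -- (3) implies (1)
  have h31 : (∀ (X : C) (i : ℕ), 1 ≤ i → i ≤ n → ∀ α : (K.F i).obj X,
        ∃ (X' : C) (f : X ⟶ X'), Mono f ∧ (K.F i).map f α = 0) →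
      ((∀ i : ℕ, i ≤ n → ∀ X : C, Function.Bijective ((φ.hom i).app X)) ∧
        (∀ X : C, Function.Injective ((φ.hom (n + 1)).app X))) := by
    intro h3
    have key : ∀ i : ℕ, i ≤ n → ∀ X : C, Function.Bijective ((φ.hom i).app X) := by
      intro i
      induction i with
      | zero => exact fun _ X => hφ0 X
      | succ j ih =>
        intro hj X
        have hbj := ih (Nat.le_of_succ_le hj)
        exact ⟨inj_step hHinj φ j hbj X,
          surj_step φ j (fun Y => (hbj Y).2)
            (fun Y α => h3 Y (j + 1) (Nat.succ_le_succ (Nat.zero_le j)) hj α) X⟩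
    exact ⟨key, inj_step hHinj φ n (key n le_rfl)⟩
  -- (1) implies (2)
  have h12 : ((∀ i : ℕ, i ≤ n → ∀ X : C, Function.Bijective ((φ.hom i).app X)) ∧
        (∀ X : C, Function.Injective ((φ.hom (n + 1)).app X))) →
      (∀ i : ℕ, i ≤ n → ∀ X : C, Function.Surjective ((φ.hom i).app X)) :=
    fun h1 i hi X => (h1.1 i hi X).2
  exact ⟨⟨h12, fun h2 => h31 (h23 h2)⟩, ⟨h23, fun h3 => h12 (h31 h3)⟩⟩
end
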